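/- Let γ₀, γ₁ be invertible d×d real matrices; write γ̄₀ := γ₁ᵀ, γ̄₁ := γ₀ᵀ, ϖ̄₀ := (γ̄₀γ̄₀ᵀ)⁻¹, ϖ̄₁ := (γ̄₁γ̄₁ᵀ)⁻¹, and Ψ_γ(v) := (I + γvγᵀ)⁻¹ for positive semidefinite v. Let ς̄₀, τ̄₀ be positive semidefinite and define recursively, for n ≥ 0: ς̄_{2n+1} := Ψ_{γ₁}(τ̄_{2n}), τ̄_{2n+1} := Ψ_{γ̄₁}(ς̄_{2n}), ς̄_{2(n+1)} := Ψ_{γ₀}(τ̄_{2n+1}), τ̄_{2(n+1)} := Ψ_{γ̄₀}(ς̄_{2n+1}). Then for all integers n ≥ p ≥ 1: τ̄_{2(n+1)} ≤ Ricc_{ϖ̄₀}^p(I) and τ̄_{2n+1} ≤ Ricc_{ϖ̄₁}^p(I) in the Loewner order. -/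

import Mathlib

open MeasureTheory ProbabilityTheory ENNReal
open scoped RealInnerProductSpace Classical

noncomputable section

/-- Euclidean space `ℝ^d`. -/
abbrev Ed (d : ℕ) : Type := EuclideanSpace ℝ (Fin d)

/-- Relative entropy `H(ν | μ)`: `∫ log (dν/dμ) dν` when `ν ≪ μ` and the
log-likelihood ratio is integrable, `∞` otherwise. -/
def relEnt {α : Type*} [MeasurableSpace α] (ν μ : Measure α) : ℝ≥0∞ :=
  if ν ≪ μ ∧ Integrable (MeasureTheory.llr ν μ) ν then
    ENNReal.ofReal (∫ x, MeasureTheory.llr ν μ x ∂ν) else ⊤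

/-- `P` is a coupling of `μ` and `ν`. -/
def isCoupling {α β : Type*} [MeasurableSpace α] [MeasurableSpace β]
    (P : Measure (α × β)) (μ : Measure α) (ν : Measure β) : Prop :=
  P.map Prod.fst = μ ∧ P.map Prod.snd = ν

/-- Squared 2-Wasserstein distance. -/
def W2sq {d : ℕ} (μ ν : Measure (Ed d)) : ℝ≥0∞ :=
  ⨅ (P : Measure (Ed d × Ed d)) (_ : isCoupling P μ ν),
    ∫⁻ p, ENNReal.ofReal (‖p.1 - p.2‖ ^ 2) ∂P

/-- Quadratic transportation cost inequality `T2(ρ)`. -/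
def SatT2 {d : ℕ} (μ : Measure (Ed d)) (ρ : ℝ) : Prop :=
  ∀ ν : Measure (Ed d), IsProbabilityMeasure ν →
    (1 / 2 : ℝ≥0∞) * W2sq ν μ ≤ ENNReal.ofReal ρ * relEnt ν μ

/-- Transport of a measure by a Markov kernel: `μK`. -/
def mbind {d : ℕ} (μ : Measure (Ed d)) (K : Kernel (Ed d) (Ed d)) : Measure (Ed d) :=
  μ.bind fun x => K x

/-- `K` is the Gibbs kernel with potential `W`: `K(x,dy) = e^{-W(x,y)} dy`,
with `W` measurable and `y ↦ W(x,y)` of class `C¹`. -/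
def IsGibbs {d : ℕ} (Wf : Ed d → Ed d → ℝ) (K : Kernel (Ed d) (Ed d)) : Prop :=
  Measurable (Function.uncurry Wf) ∧ (∀ x, ContDiff ℝ 1 (Wf x)) ∧
    ∀ x, K x = (volume : Measure (Ed d)).withDensity fun y => ENNReal.ofReal (Real.exp (-Wf x y))

/-- Fisher information cost of a Gibbs kernel. -/
def fisherCost {d : ℕ} (Wf : Ed d → Ed d → ℝ) (K : Kernel (Ed d) (Ed d)) (x₁ x₂ : Ed d) : ℝ≥0∞ :=
  ∫⁻ y, ENNReal.ofReal (‖gradient (Wf x₁) y - gradient (Wf x₂) y‖ ^ 2) ∂(K x₁)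

/-- Local log-Sobolev inequality `LS_loc(ρ)` for a Gibbs kernel. -/
def LSloc {d : ℕ} (Wf : Ed d → Ed d → ℝ) (K : Kernel (Ed d) (Ed d)) (ρ : ℝ) : Prop :=
  ∀ x₁ x₂ : Ed d, relEnt (K x₁) (K x₂) ≤ ENNReal.ofReal (ρ / 2) * fisherCost Wf K x₁ x₂

/-- Fisher–Lipschitz inequality `J₂(κ)` for a Gibbs kernel. -/
def FisherLip {d : ℕ} (Wf : Ed d → Ed d → ℝ) (K : Kernel (Ed d) (Ed d)) (κ : ℝ) : Prop :=
  ∀ x₁ x₂ : Ed d, fisherCost Wf K x₁ x₂ ≤ ENNReal.ofReal (κ ^ 2 * ‖x₁ - x₂‖ ^ 2)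

/-- Entropic transport cost `E_K(ν | μ)`. -/
def entCost {d : ℕ} (K : Kernel (Ed d) (Ed d)) (ν μ : Measure (Ed d)) : ℝ≥0∞ :=
  ⨅ (P : Measure (Ed d × Ed d)) (_ : isCoupling P ν μ),
    ∫⁻ p, relEnt (K p.1) (K p.2) ∂P

/-- `φ(ε) = ε⁻¹ / (√(1/4 + ε⁻¹) + 1/2)`. -/
def phi (ε : ℝ) : ℝ := ε⁻¹ / (Real.sqrt (1 / 4 + ε⁻¹) + 1 / 2)

/-- Application of a matrix to a vector of `ℝ^d`. -/
def mApp {d : ℕ} (M : Matrix (Fin d) (Fin d) ℝ) (x : Ed d) : Ed d :=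
  Matrix.toEuclideanLin M x

/-- Spectral norm of a matrix. -/
def spec {d : ℕ} (M : Matrix (Fin d) (Fin d) ℝ) : ℝ :=
  ‖LinearMap.toContinuousLinearMap (Matrix.toEuclideanLin M)‖

/-- Loewner order on matrices. -/
def loewnerLE {d : ℕ} (A B : Matrix (Fin d) (Fin d) ℝ) : Prop := (B - A).PosSemidef

/-- Principal square root of a positive semidefinite matrix (junk value otherwise). -/
def msqrt {d : ℕ} (A : Matrix (Fin d) (Fin d) ℝ) : Matrix (Fin d) (Fin d) ℝ :=
  if h : A.PosSemidef then
    (h.1.eigenvectorUnitary : Matrix (Fin d) (Fin d) ℝ) *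
      Matrix.diagonal (fun i => Real.sqrt (h.1.eigenvalues i)) *
      (star h.1.eigenvectorUnitary : Matrix (Fin d) (Fin d) ℝ)
  else 0

/-- Smallest eigenvalue of a symmetric matrix (junk value otherwise). -/
def lmin {d : ℕ} (A : Matrix (Fin d) (Fin d) ℝ) : ℝ :=
  if h : A.IsHermitian then ⨅ i, h.eigenvalues i else 0

/-- Largest eigenvalue of a symmetric matrix (junk value otherwise). -/
def lmax {d : ℕ} (A : Matrix (Fin d) (Fin d) ℝ) : ℝ :=
  if h : A.IsHermitian then ⨆ i, h.eigenvalues i else 0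

/-- Riccati map `Ricc_ϖ(s) = (I + (ϖ + s)⁻¹)⁻¹`. -/
def Ricc {d : ℕ} (ϖ s : Matrix (Fin d) (Fin d) ℝ) : Matrix (Fin d) (Fin d) ℝ :=
  (1 + (ϖ + s)⁻¹)⁻¹

/-- Fixed point `r_ϖ = -ϖ/2 + (ϖ + (ϖ/2)²)^{1/2}` of the Riccati map. -/
def riccFix {d : ℕ} (ϖ : Matrix (Fin d) (Fin d) ℝ) : Matrix (Fin d) (Fin d) ℝ :=
  -((1 / 2 : ℝ) • ϖ) + msqrt (ϖ + ((1 / 2 : ℝ) • ϖ) ^ 2)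

/-- `Ψ_γ(v) = (I + γ v γᵀ)⁻¹`. -/
def Psim {d : ℕ} (γ v : Matrix (Fin d) (Fin d) ℝ) : Matrix (Fin d) (Fin d) ℝ :=
  (1 + γ * v * γ.transpose)⁻¹

/-- Hessian lower bound `∇²U ≥ M` (as quadratic forms). -/
def HessLB {d : ℕ} (U : Ed d → ℝ) (M : Matrix (Fin d) (Fin d) ℝ) : Prop :=
  ∀ x v : Ed d, ⟪v, mApp M v⟫ ≤ iteratedFDeriv ℝ 2 U x ![v, v]

/-- Hessian upper bound `∇²U ≤ M` (as quadratic forms). -/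
def HessUB {d : ℕ} (U : Ed d → ℝ) (M : Matrix (Fin d) (Fin d) ℝ) : Prop :=
  ∀ x v : Ed d, iteratedFDeriv ℝ 2 U x ![v, v] ≤ ⟪v, mApp M v⟫

/-- Linear-Gaussian reference potential `W(x,y) = -log g_τ(y - (α + βx))`. -/
def gaussW {d : ℕ} (a : Ed d) (β τ : Matrix (Fin d) (Fin d) ℝ) (x y : Ed d) : ℝ :=
  -Real.log ((Real.sqrt ((2 * Real.pi) ^ d * τ.det))⁻¹ *
    Real.exp (-(1 / 2) * ⟪y - (mApp β x + a), mApp τ⁻¹ (y - (mApp β x + a))⟫))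

/-- Boltzmann–Gibbs measure `λ_U(dx) = e^{-U(x)} dx`. -/
def gibbsDensity {d : ℕ} (U : Ed d → ℝ) : Measure (Ed d) :=
  (volume : Measure (Ed d)).withDensity fun x => ENNReal.ofReal (Real.exp (-U x))

/-- Conditional covariance `Σ_K(x) = (1/2) ∫∫ (y-z)(y-z)ᵀ K(x,dy) K(x,dz)`. -/
def condCov {d : ℕ} (K : Kernel (Ed d) (Ed d)) (x : Ed d) : Matrix (Fin d) (Fin d) ℝ :=
  Matrix.of fun i j =>
    (1 / 2) * ∫ p : Ed d × Ed d, (p.1 i - p.2 i) * (p.1 j - p.2 j) ∂((K x).prod (K x))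

/-- Barycentric projection `K(I)(x) = ∫ y K(x,dy)`. -/
def bary {d : ℕ} (K : Kernel (Ed d) (Ed d)) (x : Ed d) : Ed d := ∫ y, y ∂(K x)

/-- Gradient matrix of a vector field: `(i,j)` entry is `∂ᵢ hʲ(x)`. -/
def gradMat {d : ℕ} (h : Ed d → Ed d) (x : Ed d) : Matrix (Fin d) (Fin d) ℝ :=
  Matrix.of fun i j => gradient (fun x' => h x' j) x i

/-- Sinkhorn marginal flow `π_n`. -/
def piSeq {d : ℕ} (μ η : Measure (Ed d)) (K : ℕ → Kernel (Ed d) (Ed d)) (n : ℕ) :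
    Measure (Ed d) :=
  if n % 2 = 0 then mbind μ (K n) else mbind η (K n)

/-- Sinkhorn bridges `𝒫_n`. -/
def PSeq {d : ℕ} (μ η : Measure (Ed d)) (K : ℕ → Kernel (Ed d) (Ed d)) (n : ℕ) :
    Measure (Ed d × Ed d) :=
  if n % 2 = 0 then μ ⊗ₘ K n else (η ⊗ₘ K n).map Prod.swap

/-- `n`-fold composition of a Markov kernel. -/
def kpow {d : ℕ} (S : Kernel (Ed d) (Ed d)) : ℕ → Kernel (Ed d) (Ed d)
  | 0 => Kernel.id
  | n + 1 => (kpow S n) ∘ₖ S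

end

namespace PsiRiccAux
open Matrix

variable {d : ℕ}

lemma lle_refl (A : Matrix (Fin d) (Fin d) ℝ) : loewnerLE A A := by
  simpa [loewnerLE] using Matrix.PosSemidef.zero

lemma lle_trans {A B C : Matrix (Fin d) (Fin d) ℝ} (h1 : loewnerLE A B) (h2 : loewnerLE B C) :
    loewnerLE A C := by
  have := h2.add h1
  simpa [loewnerLE, sub_add_sub_cancel] using this

lemma psd_conj {A : Matrix (Fin d) (Fin d) ℝ} (hA : A.PosSemidef)
    (C : Matrix (Fin d) (Fin d) ℝ) : (C.transpose * A * C).PosSemidef := by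
  have := hA.conjTranspose_mul_mul_same C
  rwa [Matrix.conjTranspose_eq_transpose_of_trivial] at this

lemma psd_conj' {A : Matrix (Fin d) (Fin d) ℝ} (hA : A.PosSemidef)
    (C : Matrix (Fin d) (Fin d) ℝ) : (C * A * C.transpose).PosSemidef := by
  have := hA.mul_mul_conjTranspose_same C
  rwa [Matrix.conjTranspose_eq_transpose_of_trivial] at this

lemma inv_antitone {A B : Matrix (Fin d) (Fin d) ℝ} (hA : A.PosDef) (hAB : loewnerLE A B) :
    loewnerLE B⁻¹ A⁻¹ := by
  have hB : B.PosDef := by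
    have := hA.add_posSemidef hAB
    rwa [show A + (B - A) = B by abel] at this
  have hAd : IsUnit A.det := hA.det_pos.ne'.isUnit
  have hBd : IsUnit B.det := hB.det_pos.ne'.isUnit
  set X := A⁻¹ with hX
  set Y := B⁻¹ with hY
  have e1 : Y * (B - A) * X = X - Y := by
    rw [mul_sub, sub_mul, Matrix.nonsing_inv_mul B hBd, one_mul,
      mul_assoc, Matrix.mul_nonsing_inv A hAd, mul_one]
  have e2 : Y * (B - A) * Y + Y * (B - A) * (X * (B - A) * Y) = X - Y := by
    have e1' : X * (B - A) * Y = X - Y := by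
      rw [mul_sub, sub_mul, mul_assoc, Matrix.mul_nonsing_inv B hBd, mul_one,
        Matrix.nonsing_inv_mul A hAd, one_mul]
    rw [e1', mul_sub (Y * (B - A)) X Y, e1]
    abel
  have hXsd : X.PosSemidef := hA.inv.posSemidef
  have hYh : Y.transpose = Y := by
    have := hB.inv.isHermitian
    rwa [Matrix.IsHermitian, Matrix.conjTranspose_eq_transpose_of_trivial] at this
  have hDh : (B - A).transpose = B - A := by
    have := hAB.isHermitian
    rwa [Matrix.IsHermitian, Matrix.conjTranspose_eq_transpose_of_trivial] at this
  have t1 : (Y * (B - A) * Y).PosSemidef := by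
    have := psd_conj hAB Y
    rwa [hYh] at this
  have t2 : (Y * (B - A) * (X * (B - A) * Y)).PosSemidef := by
    have := psd_conj hXsd ((B - A) * Y)
    rw [Matrix.transpose_mul, hYh, hDh] at this
    simpa only [mul_assoc] using this
  have h := t1.add t2
  rw [e2] at h
  exact h

lemma posdef_one_add {A : Matrix (Fin d) (Fin d) ℝ} (hA : A.PosSemidef) :
    (1 + A).PosDef :=
  Matrix.PosDef.add_posSemidef Matrix.PosDef.one hA

lemma le_one_of_psd {A : Matrix (Fin d) (Fin d) ℝ} (hA : A.PosSemidef) :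
    loewnerLE (1 + A)⁻¹ 1 := by
  have h := inv_antitone (Matrix.PosDef.one) (A := (1 : Matrix (Fin d) (Fin d) ℝ))
      (B := 1 + A) (by simpa [loewnerLE] using hA)
  rwa [inv_one] at h

lemma psim_psd {γ s : Matrix (Fin d) (Fin d) ℝ} (hs : s.PosSemidef) :
    (Psim γ s).PosSemidef := (posdef_one_add (psd_conj' hs γ)).inv.posSemidef

lemma psim_le_one {γ s : Matrix (Fin d) (Fin d) ℝ} (hs : s.PosSemidef) :
    loewnerLE (Psim γ s) 1 := le_one_of_psd (psd_conj' hs γ)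

lemma ricc_psd {ϖ s : Matrix (Fin d) (Fin d) ℝ} (hϖ : ϖ.PosDef) (hs : s.PosSemidef) :
    (Ricc ϖ s).PosSemidef :=
  (posdef_one_add (hϖ.add_posSemidef hs).inv.posSemidef).inv.posSemidef

lemma ricc_le_one {ϖ s : Matrix (Fin d) (Fin d) ℝ} (hϖ : ϖ.PosDef) (hs : s.PosSemidef) :
    loewnerLE (Ricc ϖ s) 1 := le_one_of_psd (hϖ.add_posSemidef hs).inv.posSemidef

lemma ricc_mono {ϖ s t : Matrix (Fin d) (Fin d) ℝ} (hϖ : ϖ.PosDef) (hs : s.PosSemidef)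
    (hst : loewnerLE s t) : loewnerLE (Ricc ϖ s) (Ricc ϖ t) := by
  have hps : (ϖ + s).PosDef := hϖ.add_posSemidef hs
  have h1 : loewnerLE (ϖ + s) (ϖ + t) := by
    simpa [loewnerLE, add_sub_add_left_eq_sub] using hst
  have h2 : loewnerLE (ϖ + t)⁻¹ (ϖ + s)⁻¹ := inv_antitone hps h1
  have h3 : loewnerLE (1 + (ϖ + t)⁻¹) (1 + (ϖ + s)⁻¹) := by
    simpa [loewnerLE, add_sub_add_left_eq_sub] using h2
  have hts : t.PosSemidef := by
    have h := hs.add hst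
    rwa [show s + (t - s) = t by abel] at h
  exact inv_antitone (posdef_one_add (hϖ.add_posSemidef hts).inv.posSemidef) h3

lemma psim_comp {γ : Matrix (Fin d) (Fin d) ℝ} (hγ : IsUnit γ.det)
    (s : Matrix (Fin d) (Fin d) ℝ) :
    Psim γ.transpose (Psim γ s) = Ricc (γ.transpose * γ)⁻¹ s := by
  have hγt : IsUnit γ.transpose.det := by rwa [Matrix.det_transpose]
  have key : γ⁻¹ * (1 + γ * s * γ.transpose) * γ.transpose⁻¹
      = (γ.transpose * γ)⁻¹ + s := by
    rw [mul_add, mul_one, add_mul, Matrix.mul_inv_rev]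
    congr 1
    rw [← mul_assoc, ← mul_assoc, Matrix.nonsing_inv_mul γ hγ, one_mul, mul_assoc,
      Matrix.mul_nonsing_inv _ hγt, mul_one]
  have h2 : ((γ.transpose * γ)⁻¹ + s)⁻¹
      = γ.transpose * (1 + γ * s * γ.transpose)⁻¹ * γ := by
    rw [← key, Matrix.mul_inv_rev, Matrix.mul_inv_rev,
      Matrix.nonsing_inv_nonsing_inv _ hγt, Matrix.nonsing_inv_nonsing_inv _ hγ,
      ← mul_assoc]
  simp only [Psim, Ricc, Matrix.transpose_transpose, h2]

lemma posdef_inv_gram {γ : Matrix (Fin d) (Fin d) ℝ} (hγ : IsUnit γ.det) :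
    ((γ.transpose * γ)⁻¹).PosDef := by
  have hpsd : (γ.transpose * γ).PosSemidef := by
    have := Matrix.posSemidef_conjTranspose_mul_self γ
    rwa [Matrix.conjTranspose_eq_transpose_of_trivial] at this
  have hpd : (γ.transpose * γ).PosDef := by
    refine Matrix.PosDef.of_dotProduct_mulVec_pos hpsd.isHermitian (fun x hx => ?_)
    have hne : γ *ᵥ x ≠ 0 := by
      have hinj : Function.Injective γ.mulVec :=
        Matrix.mulVec_injective_iff_isUnit.mpr ((Matrix.isUnit_iff_isUnit_det γ).mpr hγ)
      intro hcon
      exact hx (hinj (by simpa using hcon))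
    have hcalc : dotProduct (star x) ((γ.transpose * γ) *ᵥ x)
        = dotProduct (γ *ᵥ x) (γ *ᵥ x) := by
      rw [star_trivial, ← Matrix.mulVec_mulVec, Matrix.dotProduct_mulVec,
        Matrix.vecMul_transpose]
    rw [hcalc]
    have h0 : (0:ℝ) ≤ dotProduct (γ *ᵥ x) (γ *ᵥ x) := by
      simpa using dotProduct_self_star_nonneg (γ *ᵥ x)
    exact lt_of_le_of_ne h0 (Ne.symm (fun h => hne (dotProduct_self_eq_zero.mp h)))
  exact hpd.inv

variable {ϖ : Matrix (Fin d) (Fin d) ℝ}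

lemma iter_psd (hϖ : ϖ.PosDef) {x : Matrix (Fin d) (Fin d) ℝ} (hx : x.PosSemidef) :
    ∀ k, ((Ricc ϖ)^[k] x).PosSemidef := by
  intro k
  induction k with
  | zero => simpa using hx
  | succ k ih => rw [Function.iterate_succ_apply']; exact ricc_psd hϖ ih

lemma iter_mono (hϖ : ϖ.PosDef) {x y : Matrix (Fin d) (Fin d) ℝ} (hx : x.PosSemidef)
    (hxy : loewnerLE x y) : ∀ k, loewnerLE ((Ricc ϖ)^[k] x) ((Ricc ϖ)^[k] y) := by
  intro k
  induction k with
  | zero => simpa using hxy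
  | succ k ih =>
    rw [Function.iterate_succ_apply', Function.iterate_succ_apply']
    exact ricc_mono hϖ (iter_psd hϖ hx k) ih

lemma iter_one_succ_le (hϖ : ϖ.PosDef) :
    ∀ k, loewnerLE ((Ricc ϖ)^[k+1] 1) ((Ricc ϖ)^[k] 1) := by
  intro k
  induction k with
  | zero => simpa using ricc_le_one hϖ Matrix.PosSemidef.one
  | succ k ih =>
    have h := ricc_mono hϖ (iter_psd hϖ Matrix.PosSemidef.one (k+1)) ih
    rw [← Function.iterate_succ_apply' (Ricc ϖ) (k+1) 1,
      ← Function.iterate_succ_apply' (Ricc ϖ) k 1] at h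
    exact h

lemma iter_one_anti (hϖ : ϖ.PosDef) {p n : ℕ} (hpn : p ≤ n) :
    loewnerLE ((Ricc ϖ)^[n] 1) ((Ricc ϖ)^[p] 1) := by
  induction n, hpn using Nat.le_induction with
  | base => exact lle_refl _
  | succ n hn ih => exact lle_trans (iter_one_succ_le hϖ n) ih

lemma main_bound (hϖ : ϖ.PosDef) {x : Matrix (Fin d) (Fin d) ℝ} (hx : x.PosSemidef)
    (hx1 : loewnerLE x 1) {p n : ℕ} (hpn : p ≤ n) :
    loewnerLE ((Ricc ϖ)^[n] x) ((Ricc ϖ)^[p] 1) :=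
  lle_trans (iter_mono hϖ hx hx1 n) (iter_one_anti hϖ hpn)

end PsiRiccAux

/-- monotone bounds for the alternating `Ψ`-recursion in terms of
iterated Riccati maps. -/
theorem psi_recursion_riccati_bounds
    (d : ℕ) (γ₀ γ₁ : Matrix (Fin d) (Fin d) ℝ)
    (h0 : IsUnit γ₀.det) (h1 : IsUnit γ₁.det)
    (ς τb : ℕ → Matrix (Fin d) (Fin d) ℝ)
    (hς0 : (ς 0).PosSemidef) (hτ0 : (τb 0).PosSemidef)
    (hr1 : ∀ n : ℕ, ς (2 * n + 1) = Psim γ₁ (τb (2 * n)))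
    (hr2 : ∀ n : ℕ, τb (2 * n + 1) = Psim γ₀.transpose (ς (2 * n)))
    (hr3 : ∀ n : ℕ, ς (2 * (n + 1)) = Psim γ₀ (τb (2 * n + 1)))
    (hr4 : ∀ n : ℕ, τb (2 * (n + 1)) = Psim γ₁.transpose (ς (2 * n + 1))) :
    ∀ n p : ℕ, 1 ≤ p → p ≤ n →
      loewnerLE (τb (2 * (n + 1))) ((Ricc (γ₁.transpose * γ₁)⁻¹)^[p] 1) ∧
      loewnerLE (τb (2 * n + 1)) ((Ricc (γ₀.transpose * γ₀)⁻¹)^[p] 1) := by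
  intro n p _ hpn
  have hϖ1 : ((γ₁.transpose * γ₁)⁻¹).PosDef := PsiRiccAux.posdef_inv_gram h1
  have hϖ0 : ((γ₀.transpose * γ₀)⁻¹).PosDef := PsiRiccAux.posdef_inv_gram h0
  -- τb 1
  have eτ1 : τb 1 = Psim γ₀.transpose (ς 0) := by have := hr2 0; norm_num at this; exact this
  have hτ1psd : (τb 1).PosSemidef := eτ1 ▸ PsiRiccAux.psim_psd hς0
  have hτ1le : loewnerLE (τb 1) 1 := eτ1 ▸ PsiRiccAux.psim_le_one hς0
  -- τb 2
  have eς1 : ς 1 = Psim γ₁ (τb 0) := by have := hr1 0; norm_num at this; exact this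
  have eτ2 : τb 2 = Psim γ₁.transpose (ς 1) := by have := hr4 0; norm_num at this; exact this
  have hς1psd : (ς 1).PosSemidef := eς1 ▸ PsiRiccAux.psim_psd hτ0
  have hτ2psd : (τb 2).PosSemidef := eτ2 ▸ PsiRiccAux.psim_psd hς1psd
  have hτ2le : loewnerLE (τb 2) 1 := eτ2 ▸ PsiRiccAux.psim_le_one hς1psd
  -- odd iterates
  have hodd : ∀ m : ℕ, τb (2 * m + 1) = (Ricc (γ₀.transpose * γ₀)⁻¹)^[m] (τb 1) := by
    intro m
    induction m with
    | zero => simp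
    | succ m ih =>
      have e : τb (2 * (m + 1) + 1) = Psim γ₀.transpose (Psim γ₀ (τb (2 * m + 1))) := by
        rw [hr2 (m + 1), hr3 m]
      rw [Function.iterate_succ_apply', ← ih, e, PsiRiccAux.psim_comp h0]
  -- even iterates
  have heven : ∀ m : ℕ, τb (2 * (m + 1)) = (Ricc (γ₁.transpose * γ₁)⁻¹)^[m] (τb 2) := by
    intro m
    induction m with
    | zero => norm_num
    | succ m ih =>
      have e : τb (2 * (m + 1 + 1)) = Psim γ₁.transpose (Psim γ₁ (τb (2 * (m + 1)))) := by
        rw [hr4 (m + 1), hr1 (m + 1)]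
      rw [Function.iterate_succ_apply', ← ih, e, PsiRiccAux.psim_comp h1]
  constructor
  · rw [heven n]
    exact PsiRiccAux.main_bound hϖ1 hτ2psd hτ2le hpn
  · rw [hodd n]
    exact PsiRiccAux.main_bound hϖ0 hτ1psd hτ1le hpn
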